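/- arXiv:adap-org/9905004 — 7 statements merged into one kernel-verified Lean document; each statement's English description precedes it below -/
import Mathlib

section
/- A one-dimensional q-state n-input CA rule f is number-conserving if and only if for all (x_1,...,x_n) ∈ Q^n, f(x_1,...,x_n) = x_1 + Σ_{k=1}^{n-1} [ f(0,...,0 (k zeros), x_2, x_3, ..., x_{n-k+1}) − f(0,...,0 (k zeros), x_1, x_2, ..., x_{n-k}) ], where the arithmetic is over the integers. -/
def NumberConserving (q n : ℕ) (f : (Fin n → Fin q) → Fin q) : Prop :=
  ∀ L, n ≤ L → ∀ x : ℕ → Fin q,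
    ∑ i ∈ Finset.range L, ((f fun k => x ((i + k.val) % L)) : ℕ)
      = ∑ i ∈ Finset.range L, (x i : ℕ)

/-- `(0,…,0 (k zeros), x_2, …, x_{n-k+1})`, with `x` 0-indexed: position `i` holds
`0` if `i < k` and `x (i - k + 1)` otherwise (for `1 ≤ k ≤ n-1` the index
`i - k + 1 ≤ n - 1`, so the `min` never truncates). -/
def padShift (q n : ℕ) [NeZero q] (k : ℕ) (x : Fin n → Fin q) (hn : 0 < n) : Fin n → Fin q :=
  fun i => if i.val < k then 0 else x ⟨min (i.val - k + 1) (n - 1), by omega⟩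

/-- `(0,…,0 (k zeros), x_1, …, x_{n-k})`: position `i` holds `0` if `i < k` and
`x (i - k)` otherwise. -/
def padKeep (q n : ℕ) [NeZero q] (k : ℕ) (x : Fin n → Fin q) : Fin n → Fin q :=
  fun i => if i.val < k then 0 else x ⟨i.val - k, by have := i.isLt; omega⟩

namespace NCAux

variable {q n : ℕ} [NeZero q]

/-- The "potential" function `H`. -/
def Hf (f : (Fin n → Fin q) → Fin q) (x : Fin n → Fin q) : ℤ :=
  ∑ k ∈ Finset.Icc 1 (n - 1), ((f (padKeep q n k x) : ℕ) : ℤ)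

lemma padKeep_congr {k : ℕ} (hk : 1 ≤ k) {x y : Fin n → Fin q}
    (h : ∀ j : Fin n, j.val + 1 < n → x j = y j) :
    padKeep q n k x = padKeep q n k y := by
  funext i
  unfold padKeep
  split
  · rfl
  · rename_i hik
    exact h _ (by have := i.isLt; simp only []; omega)

/-- The shift-with-repeat that appears in `padShift`. -/
def sigMin (hn : 0 < n) (x : Fin n → Fin q) : Fin n → Fin q :=
  fun j => x ⟨min (j.val + 1) (n - 1), by omega⟩

lemma padShift_eq (hn : 0 < n) (k : ℕ) (x : Fin n → Fin q) :
    padShift q n k x hn = padKeep q n k (sigMin hn x) := by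
  funext i
  simp only [padShift, padKeep, sigMin]

/-- Shift-with-zero-appended. -/
def sig0 (x : Fin n → Fin q) : Fin n → Fin q :=
  fun j => if h : j.val + 1 < n then x ⟨j.val + 1, h⟩ else 0

lemma sigMin_agree (hn : 0 < n) (x : Fin n → Fin q) :
    ∀ j : Fin n, j.val + 1 < n → sigMin hn x j = sig0 x j := by
  intro j hj
  simp only [sigMin, sig0, dif_pos hj]
  congr 1
  have : min (j.val + 1) (n - 1) = j.val + 1 := by omega
  simp [this]

/-- The window `(x_i, …, x_{n-1}, 0, …, 0)`. -/
def tp (i : ℕ) (x : Fin n → Fin q) : Fin n → Fin q :=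
  fun j => if h : i + j.val < n then x ⟨i + j.val, h⟩ else 0

lemma tp_zero (x : Fin n → Fin q) : tp 0 x = x := by
  funext j
  simp only [tp, zero_add, dif_pos j.isLt, Fin.eta]

lemma tp_top (x : Fin n → Fin q) : tp n x = fun _ => 0 := by
  funext j
  simp only [tp, dif_neg (by omega : ¬ n + j.val < n)]

lemma tp_sig0 (x : Fin n → Fin q) (i : ℕ) : tp i (sig0 x) = tp (i + 1) x := by
  funext j
  simp only [tp, sig0]
  rcases Nat.lt_or_ge (i + 1 + j.val) n with h | h
  · rw [dif_pos (by omega : i + j.val < n), dif_pos (by omega : i + j.val + 1 < n),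
      dif_pos h]
    congr 1
    have : i + j.val + 1 = i + 1 + j.val := by omega
    simp [this]
  · rw [dif_neg (by omega : ¬ i + 1 + j.val < n)]
    rcases Nat.lt_or_ge (i + j.val) n with h2 | h2
    · rw [dif_pos h2, dif_neg (by omega : ¬ i + j.val + 1 < n)]
    · rw [dif_neg (by omega : ¬ i + j.val < n)]

lemma f_zero (f : (Fin n → Fin q) → Fin q) (hn : 0 < n)
    (hNC : NumberConserving q n f) : ((f (fun _ => 0) : ℕ) : ℤ) = 0 := by
  have h := hNC n le_rfl (fun _ => 0)
  simp only [Finset.sum_const, Finset.card_range, smul_eq_mul, Fin.val_zero, mul_zero] at h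
  rcases Nat.mul_eq_zero.mp h with h' | h'
  · omega
  · exact_mod_cast h'

/-- The key identity obtained from the configuration `(x_0,…,x_{n-1},0,…,0)`
of length `2n-1`. -/
lemma star (f : (Fin n → Fin q) → Fin q) (hn : 0 < n)
    (hNC : NumberConserving q n f) (x : Fin n → Fin q) :
    (∑ i ∈ Finset.range n, ((f (tp i x) : ℕ) : ℤ)) + Hf f x
      = ∑ i : Fin n, ((x i : ℕ) : ℤ) := by
  set L := 2 * n - 1 with hLdef
  have hnL : n ≤ L := by omega
  have hE := hNC L hnL (fun i => if h : i < n then x ⟨i, h⟩ else 0)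
  have hE' : (∑ i ∈ Finset.range L,
        ((f fun k => (fun i => if h : i < n then x ⟨i, h⟩ else 0) ((i + k.val) % L) : ℕ) : ℤ))
      = ∑ i ∈ Finset.range L,
        (((fun i => if h : i < n then x ⟨i, h⟩ else 0) i : Fin q) : ℤ) := by
    exact_mod_cast hE
  simp only [] at hE'
  have hsplit : ∀ g : ℕ → ℤ, ∑ i ∈ Finset.range L, g i
      = (∑ i ∈ Finset.range n, g i) + ∑ i ∈ Finset.Ico n L, g i := by
    intro g
    simp only [Finset.range_eq_Ico]
    rw [← Finset.sum_Ico_consecutive g (Nat.zero_le n) hnL]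
  rw [hsplit, hsplit] at hE'
  -- identify the first block of windows
  have h1 : ∀ i ∈ Finset.range n,
      ((f fun k : Fin n => if h : (i + k.val) % L < n then x ⟨(i + k.val) % L, h⟩ else 0 : ℕ) : ℤ)
        = ((f (tp i x) : ℕ) : ℤ) := by
    intro i hi
    have hi' := Finset.mem_range.mp hi
    have hfun : (fun k : Fin n => if h : (i + k.val) % L < n then x ⟨(i + k.val) % L, h⟩ else 0)
        = tp i x := by
      funext j
      have hm : (i + j.val) % L = i + j.val := Nat.mod_eq_of_lt (by have := j.isLt; omega)
      simp only [tp, hm]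
    rw [hfun]
  -- identify the wrapped windows
  have h2 : ∀ i ∈ Finset.Ico n L,
      ((f fun k : Fin n => if h : (i + k.val) % L < n then x ⟨(i + k.val) % L, h⟩ else 0 : ℕ) : ℤ)
        = ((f (padKeep q n (L - i) x) : ℕ) : ℤ) := by
    intro i hi
    obtain ⟨hi1, hi2⟩ := Finset.mem_Ico.mp hi
    have hfun : (fun k : Fin n => if h : (i + k.val) % L < n then x ⟨(i + k.val) % L, h⟩ else 0)
        = padKeep q n (L - i) x := by
      funext j
      by_cases hj : j.val < L - i
      · have hm : (i + j.val) % L = i + j.val := Nat.mod_eq_of_lt (by omega)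
        simp only [padKeep, hm, dif_neg (by omega : ¬ i + j.val < n), if_pos hj]
      · have hge : L ≤ i + j.val := by omega
        have hlt : i + j.val - L < L := by have := j.isLt; omega
        have hm : (i + j.val) % L = i + j.val - L := by
          rw [Nat.mod_eq_sub_mod hge, Nat.mod_eq_of_lt hlt]
        have hlt2 : i + j.val - L < n := by have := j.isLt; omega
        simp only [padKeep, hm, dif_pos hlt2, if_neg hj]
        congr 1
        have : i + j.val - L = j.val - (L - i) := by omega
        simp [this]
    rw [hfun]
  rw [Finset.sum_congr rfl h1, Finset.sum_congr rfl h2] at hE'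
  -- reindex the wrapped block as `Hf`
  have h3 : (∑ i ∈ Finset.Ico n L, ((f (padKeep q n (L - i) x) : ℕ) : ℤ)) = Hf f x := by
    unfold Hf
    refine Finset.sum_nbij' (fun i => L - i) (fun k => L - k) ?_ ?_ ?_ ?_ ?_
    · intro a ha
      obtain ⟨ha1, ha2⟩ := Finset.mem_Ico.mp ha
      show L - a ∈ Finset.Icc 1 (n - 1)
      exact Finset.mem_Icc.mpr (by omega)
    · intro a ha
      obtain ⟨ha1, ha2⟩ := Finset.mem_Icc.mp ha
      show L - a ∈ Finset.Ico n L
      exact Finset.mem_Ico.mpr (by omega)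
    · intro a ha
      obtain ⟨ha1, ha2⟩ := Finset.mem_Ico.mp ha
      show L - (L - a) = a
      omega
    · intro a ha
      obtain ⟨ha1, ha2⟩ := Finset.mem_Icc.mp ha
      show L - (L - a) = a
      omega
    · intro a ha; rfl
  rw [h3] at hE'
  -- simplify right-hand side
  have h4 : (∑ i ∈ Finset.Ico n L, ((if h : i < n then x ⟨i, h⟩ else 0 : Fin q) : ℤ)) = 0 := by
    refine Finset.sum_eq_zero fun i hi => ?_
    obtain ⟨hi1, _⟩ := Finset.mem_Ico.mp hi
    rw [dif_neg (by omega)]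
    simp
  rw [h4, add_zero] at hE'
  have h5 : (∑ i ∈ Finset.range n, ((if h : i < n then x ⟨i, h⟩ else 0 : Fin q) : ℤ))
      = ∑ i : Fin n, ((x i : ℕ) : ℤ) := by
    rw [← Fin.sum_univ_eq_sum_range (fun i => ((if h : i < n then x ⟨i, h⟩ else 0 : Fin q) : ℤ)) n]
    refine Finset.sum_congr rfl fun i _ => ?_
    rw [dif_pos i.isLt]
  rw [h5] at hE'
  exact hE'

end NCAux

open NCAux

theorem stmt_1 (q n : ℕ) [NeZero q] (hn : 0 < n)
    (f : (Fin n → Fin q) → Fin q) :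
    NumberConserving q n f ↔
      ∀ x : Fin n → Fin q,
        ((f x : ℕ) : ℤ) = ((x ⟨0, hn⟩ : ℕ) : ℤ) +
          ∑ k ∈ Finset.Icc 1 (n - 1),
            (((f (padShift q n k x hn) : ℕ) : ℤ)
              - ((f (padKeep q n k x) : ℕ) : ℤ)) := by
  constructor
  · -- number conservation implies the formula
    intro hNC x
    have hs := star f hn hNC x
    have hs' := star f hn hNC (sig0 x)
    -- relate the two "A" sums
    have hA : (∑ i ∈ Finset.range n, ((f (tp i (sig0 x)) : ℕ) : ℤ))
        = (∑ i ∈ Finset.range n, ((f (tp i x) : ℕ) : ℤ)) - ((f x : ℕ) : ℤ) := by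
      calc (∑ i ∈ Finset.range n, ((f (tp i (sig0 x)) : ℕ) : ℤ))
          = ∑ i ∈ Finset.range n, ((f (tp (i + 1) x) : ℕ) : ℤ) :=
            Finset.sum_congr rfl fun i _ => by rw [tp_sig0]
        _ = (∑ i ∈ Finset.range (n + 1), ((f (tp i x) : ℕ) : ℤ))
              - ((f (tp 0 x) : ℕ) : ℤ) := by
            rw [Finset.sum_range_succ' (fun i => ((f (tp i x) : ℕ) : ℤ)) n]; ring
        _ = (∑ i ∈ Finset.range n, ((f (tp i x) : ℕ) : ℤ)) - ((f x : ℕ) : ℤ) := by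
            rw [Finset.sum_range_succ, tp_top, tp_zero, f_zero f hn hNC]; ring
    -- relate the two configuration sums
    have hX : (∑ i : Fin n, ((sig0 x i : ℕ) : ℤ))
        = (∑ i : Fin n, ((x i : ℕ) : ℤ)) - ((x ⟨0, hn⟩ : ℕ) : ℤ) := by
      set G : ℕ → ℤ := fun t => if h : t < n then ((x ⟨t, h⟩ : ℕ) : ℤ) else 0 with hG
      have e1 : (∑ i : Fin n, ((sig0 x i : ℕ) : ℤ)) = ∑ i ∈ Finset.range n, G (i + 1) := by
        rw [← Fin.sum_univ_eq_sum_range (fun i => G (i + 1)) n]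
        refine Finset.sum_congr rfl fun i _ => ?_
        simp only [sig0, hG]
        rcases Nat.lt_or_ge (i.val + 1) n with h | h
        · rw [dif_pos h, dif_pos h]
        · rw [dif_neg (by omega), dif_neg (by omega)]
          simp
      have e2 : (∑ i : Fin n, ((x i : ℕ) : ℤ)) = ∑ i ∈ Finset.range n, G i := by
        rw [← Fin.sum_univ_eq_sum_range G n]
        refine Finset.sum_congr rfl fun i _ => ?_
        rw [hG]
        simp only [dif_pos i.isLt, Fin.eta]
      have e3 : ∑ i ∈ Finset.range n, G (i + 1)
          = (∑ i ∈ Finset.range n, G i) + G n - G 0 := by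
        have := Finset.sum_range_succ' G n
        rw [Finset.sum_range_succ] at this
        linarith
      have e4 : G n = 0 := by rw [hG]; exact dif_neg (by omega)
      have e5 : G 0 = ((x ⟨0, hn⟩ : ℕ) : ℤ) := by rw [hG]; exact dif_pos hn
      rw [e1, e2, e3, e4, e5]; ring
    -- relate the sum in the statement to `Hf`
    have hP : (∑ k ∈ Finset.Icc 1 (n - 1),
          (((f (padShift q n k x hn) : ℕ) : ℤ) - ((f (padKeep q n k x) : ℕ) : ℤ)))
        = Hf f (sig0 x) - Hf f x := by
      rw [Finset.sum_sub_distrib]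
      congr 1
      unfold Hf
      refine Finset.sum_congr rfl fun k hk => ?_
      rw [padShift_eq hn k x,
        padKeep_congr (Finset.mem_Icc.mp hk).1 (sigMin_agree hn x)]
    rw [hA] at hs'
    rw [hX] at hs'
    rw [hP]
    linarith
  · -- the formula implies number conservation
    intro hF L hL x
    have hL0 : 0 < L := by omega
    have key : ∀ w : ℕ → Fin n → Fin q, (∀ i k, w i k = x ((i + k.val) % L)) →
        (∑ i ∈ Finset.range L, ((f (w i) : ℕ) : ℤ))
          = ∑ i ∈ Finset.range L, ((x i : ℕ) : ℤ) := by
      intro w hw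
      have step : ∀ i ∈ Finset.range L, ((f (w i) : ℕ) : ℤ)
          = ((x i : ℕ) : ℤ) + (Hf f (w (i + 1)) - Hf f (w i)) := by
        intro i hi
        have hi' := Finset.mem_range.mp hi
        rw [hF (w i)]
        have h0 : w i ⟨0, hn⟩ = x i := by
          rw [hw]
          simp [Nat.mod_eq_of_lt hi']
        have hsh : (∑ k ∈ Finset.Icc 1 (n - 1), ((f (padShift q n k (w i) hn) : ℕ) : ℤ))
            = Hf f (w (i + 1)) := by
          unfold Hf
          refine Finset.sum_congr rfl fun k hk => ?_
          rw [padShift_eq hn k (w i),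
            padKeep_congr (Finset.mem_Icc.mp hk).1 ?_]
          intro j hj
          simp only [sigMin]
          rw [hw, hw]
          show x ((i + min (j.val + 1) (n - 1)) % L) = x ((i + 1 + j.val) % L)
          have h' : i + min (j.val + 1) (n - 1) = i + 1 + j.val := by omega
          rw [h']
        have hkeep : (∑ k ∈ Finset.Icc 1 (n - 1), ((f (padKeep q n k (w i)) : ℕ) : ℤ))
            = Hf f (w i) := rfl
        rw [Finset.sum_sub_distrib, hsh, hkeep, h0]
      rw [Finset.sum_congr rfl step, Finset.sum_add_distrib]
      have htel : (∑ i ∈ Finset.range L, (Hf f (w (i + 1)) - Hf f (w i))) = 0 := by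
        have hw0 : w L = w 0 := by
          funext k
          rw [hw, hw]
          congr 1
          rw [Nat.add_mod_left, Nat.zero_add]
        rw [Finset.sum_range_sub (fun i => Hf f (w i)) L, hw0, sub_self]
      rw [htel, add_zero]
    have := key (fun i k => x ((i + k.val) % L)) (fun _ _ => rfl)
    exact_mod_cast this
end

section
/- If f is a number-conserving q-state n-input CA rule, then Σ_{(x_1,...,x_n) ∈ Q^n} f(x_1,...,x_n) = (q−1)·q^n / 2, i.e. 2 · Σ f = (q−1)·q^n. -/
def revAux (q : ℕ) (a : Fin q) : Fin q := ⟨q - 1 - a.val, by have := a.isLt; omega⟩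

lemma revAux_invol (q : ℕ) (a : Fin q) : revAux q (revAux q a) = a := by
  have := a.isLt
  apply Fin.ext
  simp only [revAux]
  omega

lemma revAux_add (q : ℕ) (a : Fin q) : (a : ℕ) + ((revAux q a : Fin q) : ℕ) = q - 1 := by
  have := a.isLt
  simp only [revAux]
  omega

theorem stmt_4 (q n : ℕ) (hq : 0 < q) (hn : 0 < n)
    (f : (Fin n → Fin q) → Fin q) (hf : NumberConserving q n f) :
    2 * ∑ x : Fin n → Fin q, (f x : ℕ) = (q - 1) * q ^ n := by
  -- the rotation permutations of Fin n
  have σbij : ∀ i : ℕ, Function.Bijective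
      (fun k : Fin n => (⟨(i + k.val) % n, Nat.mod_lt _ hn⟩ : Fin n)) := by
    intro i
    rw [Fintype.bijective_iff_injective_and_card]
    refine ⟨fun a b hab => ?_, rfl⟩
    have h : (i + a.val) % n = (i + b.val) % n := congrArg Fin.val hab
    have h2 : a.val % n = b.val % n := Nat.ModEq.add_left_cancel' i h
    rw [Nat.mod_eq_of_lt a.isLt, Nat.mod_eq_of_lt b.isLt] at h2
    exact Fin.ext h2
  -- per-configuration identity
  have key : ∀ x : Fin n → Fin q,
      ∑ i ∈ Finset.range n,
        ((f fun k => x ⟨(i + k.val) % n, Nat.mod_lt _ hn⟩) : ℕ)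
        = ∑ j : Fin n, (x j : ℕ) := by
    intro x
    have h := hf n le_rfl (fun i => x ⟨i % n, Nat.mod_lt _ hn⟩)
    have hL : ∀ i ∈ Finset.range n,
        ((f fun k => x ⟨(i + k.val) % n % n, Nat.mod_lt _ hn⟩) : ℕ)
          = ((f fun k => x ⟨(i + k.val) % n, Nat.mod_lt _ hn⟩) : ℕ) := by
      intro i _
      congr 2
      funext k
      congr 1
      ext
      simp [Nat.mod_mod_of_dvd]
    rw [Finset.sum_congr rfl hL] at h
    rw [h, ← Fin.sum_univ_eq_sum_range (fun i => ((x ⟨i % n, Nat.mod_lt _ hn⟩ : Fin q) : ℕ)) n]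
    refine Finset.sum_congr rfl fun j _ => ?_
    congr 1
    ext
    simp [Nat.mod_eq_of_lt j.isLt]
  -- rotation invariance
  have hrot : ∀ i : ℕ,
      ∑ x : Fin n → Fin q, ((f fun k => x ⟨(i + k.val) % n, Nat.mod_lt _ hn⟩) : ℕ)
        = ∑ x : Fin n → Fin q, (f x : ℕ) := by
    intro i
    exact Fintype.sum_bijective
      (fun x : Fin n → Fin q => x ∘ fun k => (⟨(i + k.val) % n, Nat.mod_lt _ hn⟩ : Fin n))
      ((σbij i).comp_right)
      (fun x : Fin n → Fin q => ((f fun k => x ⟨(i + k.val) % n, Nat.mod_lt _ hn⟩) : ℕ))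
      (fun x : Fin n → Fin q => (f x : ℕ)) (fun x => rfl)
  -- sum the key identity over all configurations
  have summed :
      n * ∑ x : Fin n → Fin q, (f x : ℕ)
        = ∑ x : Fin n → Fin q, ∑ j : Fin n, (x j : ℕ) := by
    calc n * ∑ x : Fin n → Fin q, (f x : ℕ)
        = ∑ i ∈ Finset.range n, ∑ x : Fin n → Fin q,
            ((f fun k => x ⟨(i + k.val) % n, Nat.mod_lt _ hn⟩) : ℕ) := by
          rw [Finset.sum_congr rfl fun i _ => hrot i]
          simp [Finset.sum_const, mul_comm]
      _ = ∑ x : Fin n → Fin q, ∑ i ∈ Finset.range n,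
            ((f fun k => x ⟨(i + k.val) % n, Nat.mod_lt _ hn⟩) : ℕ) := Finset.sum_comm
      _ = ∑ x : Fin n → Fin q, ∑ j : Fin n, (x j : ℕ) :=
          Finset.sum_congr rfl fun x _ => key x
  -- reversal involution
  have ebij : Function.Bijective (fun x : Fin n → Fin q => revAux q ∘ x) := by
    have : Function.Involutive (fun x : Fin n → Fin q => revAux q ∘ x) := by
      intro x; funext j
      exact revAux_invol q (x j)
    exact this.bijective
  have hrevsum :
      ∑ x : Fin n → Fin q, ∑ j : Fin n, ((revAux q (x j) : Fin q) : ℕ)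
        = ∑ x : Fin n → Fin q, ∑ j : Fin n, (x j : ℕ) :=
    Fintype.sum_bijective (fun x : Fin n → Fin q => revAux q ∘ x) ebij
      (fun x : Fin n → Fin q => ∑ j : Fin n, ((revAux q (x j) : Fin q) : ℕ))
      (fun x : Fin n → Fin q => ∑ j : Fin n, (x j : ℕ)) (fun x => rfl)
  -- compute twice the column sum
  have hS : 2 * ∑ x : Fin n → Fin q, ∑ j : Fin n, (x j : ℕ) = n * ((q - 1) * q ^ n) := by
    have : 2 * ∑ x : Fin n → Fin q, ∑ j : Fin n, (x j : ℕ)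
        = ∑ x : Fin n → Fin q, ∑ j : Fin n, ((x j : ℕ) + ((revAux q (x j) : Fin q) : ℕ)) := by
      rw [two_mul]
      nth_rewrite 2 [← hrevsum]
      rw [← Finset.sum_add_distrib]
      exact Finset.sum_congr rfl fun x _ => (Finset.sum_add_distrib).symm
    rw [this]
    have hpt : ∀ (x : Fin n → Fin q) (j : Fin n),
        (x j : ℕ) + ((revAux q (x j) : Fin q) : ℕ) = q - 1 := by
      intro x j
      exact revAux_add q (x j)
    calc ∑ x : Fin n → Fin q, ∑ j : Fin n, ((x j : ℕ) + ((revAux q (x j) : Fin q) : ℕ))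
        = ∑ _x : Fin n → Fin q, ∑ _j : Fin n, (q - 1) :=
          Finset.sum_congr rfl fun x _ => Finset.sum_congr rfl fun j _ => hpt x j
      _ = n * ((q - 1) * q ^ n) := by
          simp [Finset.sum_const, Finset.card_univ]
          ring
  -- conclude
  have := hS
  rw [← summed] at this
  have hfinal : n * (2 * ∑ x : Fin n → Fin q, (f x : ℕ)) = n * ((q - 1) * q ^ n) := by
    rw [← this]; ring
  exact Nat.eq_of_mul_eq_mul_left hn hfinal
end

section
/- For every q ≥ 1, the rule f(x_1,x_2,x_3) = x_2 + min(x_1, q−1−x_2) − min(x_2, q−1−x_3) maps {0,...,q−1}^3 into {0,...,q−1} and is number-conserving: for every L ≥ 3 and every cyclic configuration x ∈ {0,...,q−1}^L, Σ_{i ∈ Z_L} f(x_i, x_{i+1}, x_{i+2}) = Σ_i x_i. -/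
/-- The `q`-state generalization of Rule 184, over the integers. -/
def fq (q : ℕ) (a b c : ℤ) : ℤ := b + min a ((q : ℤ) - 1 - b) - min b ((q : ℤ) - 1 - c)

lemma shift_sum (L : ℕ) (h : ℕ → ℤ) (hcyc : h L = h 0) :
    ∑ i ∈ Finset.range L, h (i + 1) = ∑ i ∈ Finset.range L, h i := by
  have h1 := Finset.sum_range_succ' h L
  have h2 := Finset.sum_range_succ h L
  rw [h1] at h2
  linarith

theorem stmt_6 (q : ℕ) (hq : 1 ≤ q) :
    (∀ a b c : ℤ, 0 ≤ a → a ≤ (q : ℤ) - 1 → 0 ≤ b → b ≤ (q : ℤ) - 1 →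
        0 ≤ c → c ≤ (q : ℤ) - 1 → 0 ≤ fq q a b c ∧ fq q a b c ≤ (q : ℤ) - 1) ∧
    (∀ L, 3 ≤ L → ∀ x : ℕ → ℤ, (∀ i, 0 ≤ x i ∧ x i ≤ (q : ℤ) - 1) →
      ∑ i ∈ Finset.range L, fq q (x (i % L)) (x ((i + 1) % L)) (x ((i + 2) % L))
        = ∑ i ∈ Finset.range L, x i) := by
  constructor
  · intro a b c ha ha' hb hb' hc hc'
    simp only [fq, min_def]
    split_ifs <;> omega
  · intro L hL x hx
    set h : ℕ → ℤ := fun j => min (x (j % L)) ((q : ℤ) - 1 - x ((j + 1) % L)) with hh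
    set k : ℕ → ℤ := fun j => x (j % L) with hk
    have key : ∀ i, fq q (x (i % L)) (x ((i + 1) % L)) (x ((i + 2) % L))
        = k (i + 1) + h i - h (i + 1) := by
      intro i
      simp only [fq, hh, hk]
    have hL0 : L % L = 0 := Nat.mod_self L
    have hL1 : (L + 1) % L = 1 := by
      rw [Nat.add_mod, hL0]
      simp [Nat.mod_eq_of_lt (by omega : 1 < L)]
    have hcycK : k L = k 0 := by simp [hk, hL0]
    have hL1' : 1 % L = 1 := Nat.mod_eq_of_lt (by omega)
    have hcycH : h L = h 0 := by simp [hh, hL0, hL1, hL1']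
    calc ∑ i ∈ Finset.range L, fq q (x (i % L)) (x ((i + 1) % L)) (x ((i + 2) % L))
        = ∑ i ∈ Finset.range L, (k (i + 1) + h i - h (i + 1)) := by
          exact Finset.sum_congr rfl fun i _ => key i
      _ = (∑ i ∈ Finset.range L, k (i + 1)) + (∑ i ∈ Finset.range L, h i)
            - ∑ i ∈ Finset.range L, h (i + 1) := by
          rw [Finset.sum_sub_distrib, Finset.sum_add_distrib]
      _ = ∑ i ∈ Finset.range L, k i := by
          rw [shift_sum L k hcycK, shift_sum L h hcycH]; ring
      _ = ∑ i ∈ Finset.range L, x i := by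
          exact Finset.sum_congr rfl fun i hi => by
            simp [hk, Nat.mod_eq_of_lt (Finset.mem_range.mp hi)]
end

section
/- If b is a De Bruijn cycle of order n over Q = {0,...,q−1} and f : Q^n → Q is number-conserving, then Σ_{(x_1,...,x_n) ∈ Q^n} f(x_1,...,x_n) = (0 + 1 + ... + (q−1)) · q^{n−1}. -/
/-!
Read the De Bruijn cycle as a cyclic configuration of length `q ^ n ≥ n`. Its windows run
through `Q^n` exactly once, so conservation turns `∑ f` over `Q^n` into the sum of the letters
of the cycle. By the same bijection (each letter is the first entry of its window) that is
`∑_{x ∈ Q^n} x₀ = (0 + ⋯ + (q - 1)) q^(n-1)`.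
-/

theorem Fintype.sum_comp_eval {ι α M : Type*} [Fintype ι] [DecidableEq ι] [Fintype α]
    [AddCommMonoid M] (g : α → M) (i : ι) :
    ∑ x : ι → α, g (x i) = Fintype.card α ^ (Fintype.card ι - 1) • ∑ a, g a := by
  rw [← (Equiv.funSplitAt i α).symm.bijective.sum_comp, Fintype.sum_prod_type]
  simp [Fintype.card_subtype_compl, Finset.smul_sum]

theorem NumberConserving.sum_cyclic_windows {q n L : ℕ} {f : (Fin n → Fin q) → Fin q}
    (hf : NumberConserving q n f) (hnL : n ≤ L) (hL : 0 < L) (b : Fin L → Fin q) :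
    ∑ i : Fin L, (f fun k => b ⟨(i + k) % L, Nat.mod_lt _ hL⟩ : ℕ) = ∑ i : Fin L, (b i : ℕ) := by
  have h := hf L hnL fun i => b ⟨i % L, Nat.mod_lt _ hL⟩
  simp only [Nat.mod_mod] at h
  rw [Fin.sum_univ_eq_sum_range (fun i => (f fun k => b ⟨(i + k) % L, Nat.mod_lt _ hL⟩ : ℕ)), h,
    ← Fin.sum_univ_eq_sum_range (fun i => (b ⟨i % L, Nat.mod_lt _ hL⟩ : ℕ))]
  simp [Nat.mod_eq_of_lt]

theorem stmt_12 (q n : ℕ) (hq : 0 < q) (hn : 0 < n)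
    (b : Fin (q ^ n) → Fin q)
    (hb : Function.Bijective
      (fun (i : Fin (q ^ n)) (k : Fin n) =>
        b ⟨(i.val + k.val) % q ^ n, Nat.mod_lt _ (pow_pos hq n)⟩))
    (f : (Fin n → Fin q) → Fin q) (hf : NumberConserving q n f) :
    ∑ x : Fin n → Fin q, (f x : ℕ) = (∑ i ∈ Finset.range q, i) * q ^ (n - 1) := by
  obtain rfl | hq2 : q = 1 ∨ 2 ≤ q := by omega
  · simp [Fin.val_eq_zero]
  calc ∑ x : Fin n → Fin q, (f x : ℕ)
      = ∑ i : Fin (q ^ n), (f fun k => b ⟨(i + k) % q ^ n, Nat.mod_lt _ (pow_pos hq n)⟩ : ℕ) :=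
        (hb.sum_comp fun x => (f x : ℕ)).symm
    _ = ∑ i : Fin (q ^ n), (b i : ℕ) :=
        hf.sum_cyclic_windows (Nat.lt_pow_self hq2).le (pow_pos hq n) b
    _ = ∑ x : Fin n → Fin q, (x ⟨0, hn⟩ : ℕ) := by
        rw [← hb.sum_comp]
        simp [Nat.mod_eq_of_lt]
    _ = (∑ i ∈ Finset.range q, i) * q ^ (n - 1) := by
        rw [Fintype.sum_comp_eval, Fin.sum_univ_eq_sum_range (fun i => i)]
        simp [mul_comm]
end

section
/- There are exactly 4 number-conserving 3-state 2-input CA rules, namely the rules with base-3 tables 222111000, 210210210, 221110110, and 211211100 (rule numbers 19305, 15897, 18561, 16641). -/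
/-- Wolfram rule number of a 3-state 2-input rule: `∑ f(a,b)·3^(3a+b)`. -/
def ruleNum (f : (Fin 2 → Fin 3) → Fin 3) : ℕ :=
  ∑ a : Fin 3, ∑ b : Fin 3, (f ![a, b] : ℕ) * 3 ^ (3 * a.val + b.val)

namespace Stmt13Aux

def v1 : Fin 3 → Fin 3 → Fin 3 := fun a _ => a
def v2 : Fin 3 → Fin 3 → Fin 3 := fun _ b => b
def v3 : Fin 3 → Fin 3 → Fin 3 := ![![0,1,1],![0,1,1],![1,2,2]]
def v4 : Fin 3 → Fin 3 → Fin 3 := ![![0,0,1],![1,1,2],![1,1,2]]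

def g1 : (Fin 2 → Fin 3) → Fin 3 := fun g => v1 (g 0) (g 1)
def g2 : (Fin 2 → Fin 3) → Fin 3 := fun g => v2 (g 0) (g 1)
def g3 : (Fin 2 → Fin 3) → Fin 3 := fun g => v3 (g 0) (g 1)
def g4 : (Fin 2 → Fin 3) → Fin 3 := fun g => v4 (g 0) (g 1)

lemma eta2 (g : Fin 2 → Fin 3) : g = ![g 0, g 1] := by
  funext k; fin_cases k <;> rfl

lemma rot (L : ℕ) (hL : 0 < L) (y : ℕ → ℤ) :
    ∑ i ∈ Finset.range L, y ((i + 1) % L) = ∑ i ∈ Finset.range L, y i := by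
  obtain ⟨m, rfl⟩ : ∃ m, L = m + 1 := ⟨L - 1, by omega⟩
  rw [Finset.sum_range_succ, Nat.mod_self, Finset.sum_range_succ' y m]
  congr 1
  apply Finset.sum_congr rfl
  intro i hi
  rw [Nat.mod_eq_of_lt (by simp at hi; omega)]

lemma nc_of (f : (Fin 2 → Fin 3) → Fin 3) (h : Fin 3 → ℤ)
    (hf : ∀ a b : Fin 3, (f ![a, b] : ℤ) = (a : ℤ) + h b - h a) :
    NumberConserving 3 2 f := by
  intro L hL x
  have key : (∑ i ∈ Finset.range L, ((f fun k => x ((i + k.val) % L)) : ℤ))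
      = ∑ i ∈ Finset.range L, (x i : ℤ) := by
    have step : ∀ i ∈ Finset.range L,
        ((f fun k => x ((i + k.val) % L)) : ℤ)
          = (x i : ℤ) + h (x ((i + 1) % L)) - h (x i) := by
      intro i hi
      have hiL : i < L := Finset.mem_range.mp hi
      have hfun : (fun k : Fin 2 => x ((i + k.val) % L)) = ![x i, x ((i + 1) % L)] := by
        funext k
        fin_cases k
        · simp [Nat.mod_eq_of_lt hiL]
        · rfl
      rw [hfun, hf]
    rw [Finset.sum_congr rfl step, Finset.sum_sub_distrib, Finset.sum_add_distrib,
      rot L (by omega) (fun n => h (x n))]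
    ring
  exact_mod_cast key

lemma eta3 (w : Fin 3 → Fin 3 → Fin 3) :
    w = ![![w 0 0, w 0 1, w 0 2], ![w 1 0, w 1 1, w 1 2], ![w 2 0, w 2 1, w 2 2]] := by
  funext a b
  fin_cases a <;> fin_cases b <;> rfl

set_option maxHeartbeats 1000000 in
set_option synthInstance.maxHeartbeats 1000000 in
set_option synthInstance.maxSize 5000 in
lemma classify9 : ∀ x00 x01 x02 x10 x11 x12 x20 x21 x22 : Fin 3,
    x00.val + x00.val + x00.val = 0 →
    x00.val + x01.val + x10.val = 1 →
    x00.val + x02.val + x20.val = 2 →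
    x01.val + x11.val + x10.val = 2 →
    x01.val + x12.val + x20.val = 3 →
    x02.val + x21.val + x10.val = 3 →
    x02.val + x22.val + x20.val = 4 →
    (x00 = 0 ∧ x01 = 0 ∧ x02 = 0 ∧ x10 = 1 ∧ x11 = 1 ∧ x12 = 1 ∧ x20 = 2 ∧ x21 = 2 ∧ x22 = 2) ∨
    (x00 = 0 ∧ x01 = 1 ∧ x02 = 2 ∧ x10 = 0 ∧ x11 = 1 ∧ x12 = 2 ∧ x20 = 0 ∧ x21 = 1 ∧ x22 = 2) ∨
    (x00 = 0 ∧ x01 = 1 ∧ x02 = 1 ∧ x10 = 0 ∧ x11 = 1 ∧ x12 = 1 ∧ x20 = 1 ∧ x21 = 2 ∧ x22 = 2) ∨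
    (x00 = 0 ∧ x01 = 0 ∧ x02 = 1 ∧ x10 = 1 ∧ x11 = 1 ∧ x12 = 2 ∧ x20 = 1 ∧ x21 = 1 ∧ x22 = 2) := by
  decide

lemma classify (v : Fin 3 → Fin 3 → Fin 3)
    (C : ∀ a b c : Fin 3, (v a b).val + (v b c).val + (v c a).val = a.val + b.val + c.val) :
    v = v1 ∨ v = v2 ∨ v = v3 ∨ v = v4 := by
  have z0 : ((0 : Fin 3)).val = 0 := rfl
  have z1 : ((1 : Fin 3)).val = 1 := rfl
  have z2 : ((2 : Fin 3)).val = 2 := rfl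
  have e := classify9 (v 0 0) (v 0 1) (v 0 2) (v 1 0) (v 1 1) (v 1 2) (v 2 0) (v 2 1) (v 2 2)
    (by have h := C 0 0 0; omega)
    (by have h := C 0 0 1; omega)
    (by have h := C 0 0 2; omega)
    (by have h := C 0 1 1; omega)
    (by have h := C 0 1 2; omega)
    (by have h := C 0 2 1; omega)
    (by have h := C 0 2 2; omega)
  rcases e with ⟨h1,h2,h3,h4,h5,h6,h7,h8,h9⟩ | ⟨h1,h2,h3,h4,h5,h6,h7,h8,h9⟩ |
    ⟨h1,h2,h3,h4,h5,h6,h7,h8,h9⟩ | ⟨h1,h2,h3,h4,h5,h6,h7,h8,h9⟩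
  · left
    rw [eta3 v, h1, h2, h3, h4, h5, h6, h7, h8, h9]; decide
  · right; left
    rw [eta3 v, h1, h2, h3, h4, h5, h6, h7, h8, h9]; decide
  · right; right; left
    rw [eta3 v, h1, h2, h3, h4, h5, h6, h7, h8, h9]; decide
  · right; right; right
    rw [eta3 v, h1, h2, h3, h4, h5, h6, h7, h8, h9]; decide

lemma constraint (f : (Fin 2 → Fin 3) → Fin 3) (hf : NumberConserving 3 2 f)
    (a b c : Fin 3) :
    (f ![a, b]).val + (f ![b, c]).val + (f ![c, a]).val = a.val + b.val + c.val := by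
  have := hf 3 (by norm_num) (fun i => ![a, b, c] ⟨i % 3, Nat.mod_lt _ (by norm_num)⟩)
  simp only [Finset.sum_range_succ, Finset.sum_range_zero] at this
  have e0 : (fun k : Fin 2 => (fun i => ![a, b, c] ⟨i % 3, Nat.mod_lt i (by norm_num)⟩) ((0 + k.val) % 3)) = ![a, b] := by
    funext k; fin_cases k <;> rfl
  have e1 : (fun k : Fin 2 => (fun i => ![a, b, c] ⟨i % 3, Nat.mod_lt i (by norm_num)⟩) ((1 + k.val) % 3)) = ![b, c] := by
    funext k; fin_cases k <;> rfl
  have e2 : (fun k : Fin 2 => (fun i => ![a, b, c] ⟨i % 3, Nat.mod_lt i (by norm_num)⟩) ((2 + k.val) % 3)) = ![c, a] := by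
    funext k; fin_cases k <;> rfl
  rw [e0, e1, e2] at this
  simpa using this

lemma setEq : {f : (Fin 2 → Fin 3) → Fin 3 | NumberConserving 3 2 f}
    = {g1, g2, g3, g4} := by
  ext f
  constructor
  · intro hf
    have h := classify (fun a b => f ![a, b]) (constraint f hf)
    have hfe : f = fun g : Fin 2 → Fin 3 => (fun a b => f ![a, b]) (g 0) (g 1) := by
      funext g; rw [eta2 g]; rfl
    rcases h with h | h | h | h
    · left; rw [hfe, h]; rfl
    · right; left; rw [hfe, h]; rfl
    · right; right; left; rw [hfe, h]; rfl
    · right; right; right; rw [hfe, h]; rfl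
  · intro hf
    rcases hf with rfl | rfl | rfl | hf
    · exact nc_of g1 (fun _ => 0) (by decide)
    · exact nc_of g2 (fun a => (a : ℤ)) (by decide)
    · exact nc_of g3 (fun a => min (a : ℤ) 1) (by decide)
    · rw [Set.mem_singleton_iff] at hf; subst hf
      exact nc_of g4 (fun a => if a = 2 then 1 else 0) (by decide)

end Stmt13Aux

theorem stmt_13 :
    ({f : (Fin 2 → Fin 3) → Fin 3 | NumberConserving 3 2 f}).ncard = 4 ∧
    ruleNum '' {f : (Fin 2 → Fin 3) → Fin 3 | NumberConserving 3 2 f}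
      = {19305, 15897, 18561, 16641} := by
  open Stmt13Aux in
  rw [Stmt13Aux.setEq]
  constructor
  · have : ({g1, g2, g3, g4} : Set ((Fin 2 → Fin 3) → Fin 3))
        = (↑({g1, g2, g3, g4} : Finset ((Fin 2 → Fin 3) → Fin 3)) : Set _) := by
      simp
    rw [this, Set.ncard_coe_finset]
    decide
  · rw [Set.image_insert_eq, Set.image_insert_eq, Set.image_insert_eq, Set.image_singleton]
    have h1 : ruleNum g1 = 19305 := by decide
    have h2 : ruleNum g2 = 15897 := by decide
    have h3 : ruleNum g3 = 18561 := by decide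
    have h4 : ruleNum g4 = 16641 := by decide
    rw [h1, h2, h3, h4]
end

section
/- A 3-state 2-input rule f : {0,1,2}^2 → {0,1,2} is number-conserving if and only if f(0,0) = 0 and for all (x_1, x_2), f(x_1, x_2) = x_1 + f(0, x_2) − f(0, x_1) (as integers). -/
private lemma nc_sum2 {f : (Fin 2 → Fin 3) → Fin 3} (h : NumberConserving 3 2 f)
    (a b : Fin 3) : (f ![a, b] : ℕ) + (f ![b, a] : ℕ) = (a : ℕ) + (b : ℕ) := by
  have := h 2 le_rfl (fun i => if i % 2 = 0 then a else b)
  simp only [Finset.sum_range_succ, Finset.sum_range_zero] at this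
  have e0 : (fun k : Fin 2 => if (0 + k.val) % 2 % 2 = 0 then a else b) = ![a, b] := by
    funext k; fin_cases k <;> simp
  have e1 : (fun k : Fin 2 => if (1 + k.val) % 2 % 2 = 0 then a else b) = ![b, a] := by
    funext k; fin_cases k <;> simp
  rw [e0, e1] at this
  simpa using this

private lemma nc_sum3 {f : (Fin 2 → Fin 3) → Fin 3} (h : NumberConserving 3 2 f)
    (a b c : Fin 3) :
    (f ![a, b] : ℕ) + (f ![b, c] : ℕ) + (f ![c, a] : ℕ) = (a : ℕ) + (b : ℕ) + (c : ℕ) := by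
  have := h 3 (by norm_num) (fun i => if i % 3 = 0 then a else if i % 3 = 1 then b else c)
  simp only [Finset.sum_range_succ, Finset.sum_range_zero] at this
  have e0 : (fun k : Fin 2 => if (0 + k.val) % 3 % 3 = 0 then a else
      if (0 + k.val) % 3 % 3 = 1 then b else c) = ![a, b] := by
    funext k; fin_cases k <;> simp
  have e1 : (fun k : Fin 2 => if (1 + k.val) % 3 % 3 = 0 then a else
      if (1 + k.val) % 3 % 3 = 1 then b else c) = ![b, c] := by
    funext k; fin_cases k <;> simp
  have e2 : (fun k : Fin 2 => if (2 + k.val) % 3 % 3 = 0 then a else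
      if (2 + k.val) % 3 % 3 = 1 then b else c) = ![c, a] := by
    funext k; fin_cases k <;> simp
  rw [e0, e1, e2] at this
  simpa using this

theorem stmt_14 (f : (Fin 2 → Fin 3) → Fin 3) :
    NumberConserving 3 2 f ↔
      (f ![0, 0] = 0 ∧
        ∀ a b : Fin 3, ((f ![a, b] : ℕ) : ℤ)
          = (a : ℕ) + ((f ![0, b] : ℕ) : ℤ) - ((f ![0, a] : ℕ) : ℤ)) := by
  constructor
  · intro h
    constructor
    · have := nc_sum2 h 0 0
      simp only [Fin.val_zero] at this
      have : (f ![0, 0] : ℕ) = 0 := by omega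
      exact Fin.ext this
    · intro a b
      have h3 := nc_sum3 h 0 a b
      have h2 := nc_sum2 h b 0
      simp only [Fin.val_zero] at h3 h2
      omega
  · rintro ⟨h0, hf⟩
    intro L hL x
    have hLpos : 0 < L := by omega
    obtain ⟨M, rfl⟩ : ∃ M, L = M + 1 := ⟨L - 1, by omega⟩
    have key : ∀ i ∈ Finset.range (M + 1),
        ((f fun k => x ((i + k.val) % (M + 1)) : ℕ) : ℤ)
          = ((x (i % (M + 1)) : ℕ) : ℤ)
            + ((f ![0, x ((i + 1) % (M + 1))] : ℕ) : ℤ)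
            - ((f ![0, x (i % (M + 1))] : ℕ) : ℤ) := by
      intro i _
      have e : (fun k : Fin 2 => x ((i + k.val) % (M + 1)))
          = ![x (i % (M + 1)), x ((i + 1) % (M + 1))] := by
        funext k; fin_cases k <;> simp
      rw [e, hf]
    have hcast : ((∑ i ∈ Finset.range (M + 1),
        ((f fun k => x ((i + k.val) % (M + 1))) : ℕ) : ℕ) : ℤ)
        = ((∑ i ∈ Finset.range (M + 1), (x i : ℕ) : ℕ) : ℤ) := by
      push_cast
      rw [Finset.sum_congr rfl key]
      rw [Finset.sum_sub_distrib, Finset.sum_add_distrib]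
      have hmod : ∀ i ∈ Finset.range (M + 1), i % (M + 1) = i := fun i hi =>
        Nat.mod_eq_of_lt (Finset.mem_range.mp hi)
      have hx : ∑ i ∈ Finset.range (M + 1), ((x (i % (M + 1)) : ℕ) : ℤ)
          = ∑ i ∈ Finset.range (M + 1), ((x i : ℕ) : ℤ) := by
        refine Finset.sum_congr rfl fun i hi => by rw [hmod i hi]
      have hshift : ∑ i ∈ Finset.range (M + 1), ((f ![0, x ((i + 1) % (M + 1))] : ℕ) : ℤ)
          = ∑ i ∈ Finset.range (M + 1), ((f ![0, x (i % (M + 1))] : ℕ) : ℤ) := by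
        rw [Finset.sum_range_succ, Finset.sum_range_succ']
        simp
      rw [hx, hshift]
      ring
    exact Nat.cast_injective hcast
end

section
/- A rule f : Q^n → Q is number-conserving if and only if there exists a function F : Q^{n-1} → ℤ such that for all (x_1,...,x_n) ∈ Q^n, f(x_1,...,x_n) = x_1 + F(x_2,...,x_n) − F(x_1,...,x_{n-1}) (integer arithmetic). -/
def cfg (q m : ℕ) (hq : 0 < q) (y : Fin m → Fin q) (a : ℕ) : Fin q :=
  if h : a < m then y ⟨a, h⟩ else ⟨0, hq⟩

def Faux (q n : ℕ) (hq : 0 < q) (f : (Fin n → Fin q) → Fin q)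
    (y : Fin (n - 1) → Fin q) : ℤ :=
  ∑ i ∈ Finset.Ico n (2 * n - 1),
    ((f fun k => cfg q (n - 1) hq y ((i + k.val) % (2 * n - 1)) : ℕ) : ℤ)

lemma cfg_lt {q m : ℕ} (hq : 0 < q) (y : Fin m → Fin q) {a : ℕ} (h : a < m) :
    cfg q m hq y a = y ⟨a, h⟩ := dif_pos h

lemma cfg_ge {q m : ℕ} (hq : 0 < q) (y : Fin m → Fin q) {a : ℕ} (h : m ≤ a) :
    cfg q m hq y a = ⟨0, hq⟩ := dif_neg (by omega)

lemma key (q n : ℕ) (hn : 2 ≤ n) (hq : 0 < q) (f : (Fin n → Fin q) → Fin q)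
    (hNC : NumberConserving q n f) (x : Fin n → Fin q) :
    ((f x : ℕ) : ℤ)
      = ((x ⟨0, by omega⟩ : ℕ) : ℤ)
        + Faux q n hq f (fun i => x ⟨i.val + 1, by have := i.isLt; omega⟩)
        - Faux q n hq f (fun i => x ⟨i.val, by have := i.isLt; omega⟩) := by
  set y1 : Fin (n-1) → Fin q := fun i => x ⟨i.val + 1, by have := i.isLt; omega⟩ with hy1
  set y0 : Fin (n-1) → Fin q := fun i => x ⟨i.val, by have := i.isLt; omega⟩ with hy0
  -- the two number-conservation instances, cast to ℤ
  have hA0 : ∑ i ∈ Finset.range (2*n-1),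
        ((f fun k => cfg q n hq x ((i + k.val) % (2*n-1)) : ℕ) : ℤ)
      = ∑ i ∈ Finset.range (2*n-1), ((cfg q n hq x i : ℕ) : ℤ) := by
    exact_mod_cast hNC (2*n-1) (by omega) (cfg q n hq x)
  have hB0 : ∑ i ∈ Finset.range (2*n-1),
        ((f fun k => cfg q (n-1) hq y1 ((i + k.val) % (2*n-1)) : ℕ) : ℤ)
      = ∑ i ∈ Finset.range (2*n-1), ((cfg q (n-1) hq y1 i : ℕ) : ℤ) := by
    exact_mod_cast hNC (2*n-1) (by omega) (cfg q (n-1) hq y1)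
  set gA : ℕ → ℤ := fun i => ((f fun k => cfg q n hq x ((i + k.val) % (2*n-1)) : ℕ) : ℤ) with hgA
  set gB : ℕ → ℤ := fun i => ((f fun k => cfg q (n-1) hq y1 ((i + k.val) % (2*n-1)) : ℕ) : ℤ) with hgB
  -- value of f on the zero window
  have hf0 : ((f fun _ => (⟨0, hq⟩ : Fin q)) : ℕ) = 0 := by
    have h := hNC n le_rfl (fun _ => (⟨0, hq⟩ : Fin q))
    simp only [Finset.sum_const, Finset.card_range, smul_eq_mul] at h
    rw [mul_zero] at h
    rcases Nat.mul_eq_zero.mp h with h' | h'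
    · omega
    · exact h'
  -- splitting the left-hand sides
  have hsplitA : Finset.sum (Finset.range (2*n-1)) gA
      = gA 0 + Finset.sum (Finset.Ico 1 n) gA + Finset.sum (Finset.Ico n (2*n-1)) gA := by
    rw [Finset.range_eq_Ico,
      ← Finset.sum_Ico_consecutive gA (by omega : (0:ℕ) ≤ n) (by omega : n ≤ 2*n-1),
      ← Finset.sum_Ico_consecutive gA (by omega : (0:ℕ) ≤ 1) (by omega : 1 ≤ n)]
    have h01 : Finset.Ico 0 1 = {0} := rfl
    rw [h01, Finset.sum_singleton]
  have hsplitB : Finset.sum (Finset.range (2*n-1)) gB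
      = Finset.sum (Finset.Ico 0 (n-1)) gB + gB (n-1) + Finset.sum (Finset.Ico n (2*n-1)) gB := by
    rw [Finset.range_eq_Ico,
      ← Finset.sum_Ico_consecutive gB (by omega : (0:ℕ) ≤ n) (by omega : n ≤ 2*n-1),
      ← Finset.sum_Ico_consecutive gB (by omega : (0:ℕ) ≤ n-1) (by omega : n-1 ≤ n)]
    have hsing : Finset.Ico (n-1) n = {n-1} := by
      ext a
      simp only [Finset.mem_Ico, Finset.mem_singleton]
      omega
    rw [hsing, Finset.sum_singleton]
  -- first term of A is f x
  have hA1 : gA 0 = ((f x : ℕ) : ℤ) := by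
    simp only [hgA]
    have hw : (fun k : Fin n => cfg q n hq x ((0 + k.val) % (2*n-1))) = x := by
      funext k
      rw [Nat.zero_add, Nat.mod_eq_of_lt (show k.val < 2*n-1 by have := k.isLt; omega),
        cfg_lt hq x k.isLt]
    rw [hw]
  -- middle terms agree
  have hmid : Finset.sum (Finset.Ico 1 n) gA = Finset.sum (Finset.Ico 0 (n-1)) gB := by
    rw [Finset.sum_Ico_eq_sum_range, Finset.sum_Ico_eq_sum_range]
    simp only [Nat.sub_zero, Nat.zero_add]
    apply Finset.sum_congr rfl
    intro i hi
    rw [Finset.mem_range] at hi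
    have hw : (fun k : Fin n => cfg q n hq x ((1 + i + k.val) % (2*n-1)))
        = fun k : Fin n => cfg q (n-1) hq y1 ((i + k.val) % (2*n-1)) := by
      funext k
      have hk := k.isLt
      rw [Nat.mod_eq_of_lt (show 1 + i + k.val < 2*n-1 by omega),
        Nat.mod_eq_of_lt (show i + k.val < 2*n-1 by omega)]
      by_cases hc : i + k.val < n - 1
      · rw [show 1 + i + k.val = i + k.val + 1 from by omega,
          cfg_lt hq x (show i + k.val + 1 < n by omega), cfg_lt hq y1 hc]
      · rw [cfg_ge hq x (show n ≤ 1 + i + k.val by omega), cfg_ge hq y1 (by omega)]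
    rw [hw]
  -- third segment of A is Faux applied to the initial part
  have hFA : Finset.sum (Finset.Ico n (2*n-1)) gA = Faux q n hq f y0 := by
    rw [Faux]
    apply Finset.sum_congr rfl
    intro i hi
    rw [Finset.mem_Ico] at hi
    simp only [hgA]
    have hw : (fun k : Fin n => cfg q n hq x ((i + k.val) % (2*n-1)))
        = fun k : Fin n => cfg q (n-1) hq y0 ((i + k.val) % (2*n-1)) := by
      funext k
      have hk := k.isLt
      rcases Nat.lt_or_ge (i + k.val) (2*n-1) with hlt | hge
      · rw [Nat.mod_eq_of_lt hlt, cfg_ge hq x (show n ≤ i + k.val by omega),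
          cfg_ge hq y0 (show n - 1 ≤ i + k.val by omega)]
      · have hm : (i + k.val) % (2*n-1) = i + k.val - (2*n-1) := by
          rw [Nat.mod_eq_sub_mod hge, Nat.mod_eq_of_lt (by omega)]
        rw [hm, cfg_lt hq x (show i + k.val - (2*n-1) < n by omega),
          cfg_lt hq y0 (show i + k.val - (2*n-1) < n - 1 by omega)]
    rw [hw]
  -- third segment of B is Faux applied to the tail part
  have hFB : Finset.sum (Finset.Ico n (2*n-1)) gB = Faux q n hq f y1 := rfl
  -- middle zero term of B
  have hB1 : gB (n-1) = 0 := by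
    simp only [hgB]
    have hw : (fun k : Fin n => cfg q (n-1) hq y1 ((n - 1 + k.val) % (2*n-1)))
        = fun _ => (⟨0, hq⟩ : Fin q) := by
      funext k
      have hk := k.isLt
      rw [Nat.mod_eq_of_lt (show n - 1 + k.val < 2*n-1 by omega), cfg_ge hq y1 (by omega)]
    rw [hw, hf0]
    rfl
  -- right-hand sides
  have hfirst : ((cfg q n hq x 0 : ℕ) : ℤ) = ((x ⟨0, by omega⟩ : ℕ) : ℤ) := by
    rw [cfg_lt hq x (show 0 < n by omega)]
  have hlast : ((cfg q (n-1) hq y1 (2*n-2) : ℕ) : ℤ) = 0 := by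
    rw [cfg_ge hq y1 (by omega)]
    rfl
  have hshift : ∀ i ∈ Finset.range (2*n-2),
      ((cfg q n hq x (i+1) : ℕ) : ℤ) = ((cfg q (n-1) hq y1 i : ℕ) : ℤ) := by
    intro i _
    by_cases hc : i < n - 1
    · rw [cfg_lt hq x (show i + 1 < n by omega), cfg_lt hq y1 hc]
    · rw [cfg_ge hq x (by omega), cfg_ge hq y1 (by omega)]
  have hRHS : ∑ i ∈ Finset.range (2*n-1), ((cfg q n hq x i : ℕ) : ℤ)
      = ((x ⟨0, by omega⟩ : ℕ) : ℤ)
        + ∑ i ∈ Finset.range (2*n-1), ((cfg q (n-1) hq y1 i : ℕ) : ℤ) := by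
    have hsing2 : Finset.Ico (2*n-2) (2*n-1) = {2*n-2} := by
      ext a
      simp only [Finset.mem_Ico, Finset.mem_singleton]
      omega
    have hsA : ∑ i ∈ Finset.range (2*n-1), ((cfg q n hq x i : ℕ) : ℤ)
        = ((cfg q n hq x 0 : ℕ) : ℤ)
          + ∑ i ∈ Finset.Ico 1 (2*n-1), ((cfg q n hq x i : ℕ) : ℤ) := by
      rw [Finset.range_eq_Ico,
        ← Finset.sum_Ico_consecutive (fun i => ((cfg q n hq x i : ℕ) : ℤ))
          (by omega : (0:ℕ) ≤ 1) (by omega : 1 ≤ 2*n-1)]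
      rw [show Finset.Ico 0 1 = {0} from rfl, Finset.sum_singleton]
    have hsB : ∑ i ∈ Finset.range (2*n-1), ((cfg q (n-1) hq y1 i : ℕ) : ℤ)
        = (∑ i ∈ Finset.Ico 0 (2*n-2), ((cfg q (n-1) hq y1 i : ℕ) : ℤ))
          + ((cfg q (n-1) hq y1 (2*n-2) : ℕ) : ℤ) := by
      rw [Finset.range_eq_Ico,
        ← Finset.sum_Ico_consecutive (fun i => ((cfg q (n-1) hq y1 i : ℕ) : ℤ))
          (by omega : (0:ℕ) ≤ 2*n-2) (by omega : 2*n-2 ≤ 2*n-1)]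
      rw [hsing2, Finset.sum_singleton]
    have hmid2 : ∑ i ∈ Finset.Ico 1 (2*n-1), ((cfg q n hq x i : ℕ) : ℤ)
        = ∑ i ∈ Finset.Ico 0 (2*n-2), ((cfg q (n-1) hq y1 i : ℕ) : ℤ) := by
      rw [Finset.sum_Ico_eq_sum_range, Finset.sum_Ico_eq_sum_range]
      simp only [Nat.sub_zero, Nat.zero_add]
      rw [show 2*n-1-1 = 2*n-2 from by omega]
      apply Finset.sum_congr rfl
      intro i hi
      rw [Finset.mem_range] at hi
      rw [show 1 + i = i + 1 from by omega]
      by_cases hc : i < n - 1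
      · rw [cfg_lt hq x (show i + 1 < n by omega), cfg_lt hq y1 hc]
      · rw [cfg_ge hq x (by omega), cfg_ge hq y1 (by omega)]
    linarith [hsA, hsB, hmid2, hfirst, hlast]
  rw [hsplitA, hA1, hmid, hFA, hRHS] at hA0
  rw [hsplitB, hB1, hFB] at hB0
  linarith


theorem stmt_19 (q n : ℕ) (hn : 2 ≤ n) (f : (Fin n → Fin q) → Fin q) :
    NumberConserving q n f ↔
      ∃ F : (Fin (n - 1) → Fin q) → ℤ,
        ∀ x : Fin n → Fin q,
          ((f x : ℕ) : ℤ)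
            = ((x ⟨0, by omega⟩ : ℕ) : ℤ)
              + F (fun i => x ⟨i.val + 1, by have := i.isLt; omega⟩)
              - F (fun i => x ⟨i.val, by have := i.isLt; omega⟩) := by
  constructor
  · intro hNC
    rcases Nat.eq_zero_or_pos q with hq | hq
    · subst hq
      exact ⟨fun _ => 0, fun x => (x ⟨0, by omega⟩).elim0⟩
    · exact ⟨Faux q n hq f, fun x => key q n hn hq f hNC x⟩
  · rintro ⟨F, hF⟩
    intro L hL x
    have hL0 : 0 < L := by omega
    set g : ℕ → ℤ := fun i => F (fun j : Fin (n-1) => x ((i + j.val) % L)) with hg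
    have key : ∀ i : ℕ, ((f fun k => x ((i + k.val) % L)) : ℤ)
        = ((x (i % L) : ℕ) : ℤ) + (g (i+1) - g i) := by
      intro i
      have h := hF (fun k => x ((i + k.val) % L))
      rw [h]
      have h1 : (fun j : Fin (n-1) => x ((i + (j.val + 1)) % L))
          = (fun j : Fin (n-1) => x ((i + 1 + j.val) % L)) := by
        funext j
        have : i + (j.val + 1) = i + 1 + j.val := by omega
        rw [this]
      simp only [hg, h1]
      rw [add_sub_assoc]
      norm_num
    have hsum : ∑ i ∈ Finset.range L, ((f fun k => x ((i + k.val) % L)) : ℤ)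
        = ∑ i ∈ Finset.range L, ((x i : ℕ) : ℤ) := by
      have h2 : ∀ i ∈ Finset.range L, ((f fun k => x ((i + k.val) % L)) : ℤ)
          = ((x i : ℕ) : ℤ) + (g (i+1) - g i) := by
        intro i hi
        rw [key i, Nat.mod_eq_of_lt (Finset.mem_range.mp hi)]
      rw [Finset.sum_congr rfl h2, Finset.sum_add_distrib, Finset.sum_range_sub g]
      have h3 : g L = g 0 := by
        simp only [hg]
        congr 1
        funext j
        simp [Nat.add_mod_left]
      rw [h3]
      ring
    exact_mod_cast hsum
end
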